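/- arXiv:1608.06769 — 6 statements merged into one kernel-verified Lean document; each statement's English description precedes it below -/
import Mathlib

section
/- Reuter-type uniqueness criterion (core of Theorem 1): Suppose each level supremum λ_i is finite and strictly positive and the regularity condition Σ_{i=1}^∞ 1/λ_i = ∞ holds. If ζ > 0 and y : ℕ^d → ℝ satisfies 0 ≤ y(x) ≤ 1 for all x and the equations (ζ + S(x))·y(x) = Σ_{k=1}^d λ(x,k)·y(x + e_k) for all x ∈ ℕ^d, then y(x) = 0 for all x ∈ ℕ^d. -/
open Filter

/-- Reuter-type uniqueness criterion (core of Theorem 1): under the regularity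
condition `∑ 1/λᵢ = ∞` on the (finite, positive) level suprema of the total birth
rates, any `y : ℕ^d → [0,1]` solving `(ζ + S(x))·y(x) = ∑ₖ λ(x,k)·y(x+eₖ)` with
`ζ > 0` is identically zero. -/
theorem reuter_uniqueness
    (d : ℕ) (hd : 1 ≤ d)
    (lam : (Fin d → ℕ) → Fin d → ℝ)
    (hlam : ∀ x k, 0 ≤ lam x k)
    (Lam : ℕ → ℝ)
    (hLam : ∀ i : ℕ,
      IsLUB {r : ℝ | ∃ x : Fin d → ℕ, (∑ k, x k) = i ∧ r = ∑ k, lam x k} (Lam i))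
    (hLamPos : ∀ i, 0 < Lam i)
    (hreg : Tendsto (fun n => ∑ i ∈ Finset.range n, 1 / Lam i) atTop atTop)
    (ζ : ℝ) (hζ : 0 < ζ)
    (y : (Fin d → ℕ) → ℝ)
    (hy0 : ∀ x, 0 ≤ y x) (hy1 : ∀ x, y x ≤ 1)
    (heq : ∀ x, (ζ + ∑ k, lam x k) * y x = ∑ k, lam x k * y (x + Pi.single k 1)) :
    ∀ x, y x = 0 := by
  set M : ℕ → ℝ := fun i => sSup {r | ∃ x : Fin d → ℕ, (∑ k, x k) = i ∧ r = y x} with hMdef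
  have hne : ∀ i, ∃ x : Fin d → ℕ, (∑ k, x k) = i := by
    intro i
    refine ⟨Pi.single ⟨0, hd⟩ i, ?_⟩
    simp [Finset.sum_pi_single']
  have hbdd : ∀ i, BddAbove {r | ∃ x : Fin d → ℕ, (∑ k, x k) = i ∧ r = y x} := by
    intro i
    exact ⟨1, fun r ⟨x, _, hr⟩ => hr ▸ hy1 x⟩
  have hsne : ∀ i, Set.Nonempty {r | ∃ x : Fin d → ℕ, (∑ k, x k) = i ∧ r = y x} := by
    intro i
    obtain ⟨x, hx⟩ := hne i
    exact ⟨y x, x, hx, rfl⟩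
  have hle : ∀ x : Fin d → ℕ, y x ≤ M (∑ k, x k) :=
    fun x => le_csSup (hbdd _) ⟨x, rfl, rfl⟩
  have hM0 : ∀ i, 0 ≤ M i := by
    intro i
    obtain ⟨x, hx⟩ := hne i
    calc (0:ℝ) ≤ y x := hy0 x
      _ ≤ M i := hx ▸ hle x
  have hM1 : ∀ i, M i ≤ 1 := by
    intro i
    exact csSup_le (hsne i) (fun r ⟨x, _, hr⟩ => hr ▸ hy1 x)
  -- key pointwise inequality
  have key : ∀ (i : ℕ) (x : Fin d → ℕ), (∑ k, x k) = i →
      (ζ + Lam i) * y x ≤ Lam i * M (i + 1) := by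
    intro i x hx
    have hSle : (∑ k, lam x k) ≤ Lam i := (hLam i).1 ⟨x, hx, rfl⟩
    have hS0 : 0 ≤ ∑ k, lam x k := Finset.sum_nonneg fun k _ => hlam x k
    have hy' : ∀ k, y (x + Pi.single k 1) ≤ M (i + 1) := by
      intro k
      have hsum : (∑ m : Fin d, (x + Pi.single k 1 : Fin d → ℕ) m) = i + 1 := by
        simp only [Pi.add_apply, Finset.sum_add_distrib, hx,
          Finset.sum_pi_single', Finset.mem_univ, if_true]
      have := hle (x + Pi.single k 1)
      rwa [hsum] at this
    have hstep : (ζ + ∑ k, lam x k) * y x ≤ (∑ k, lam x k) * M (i + 1) := by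
      rw [heq x]
      calc ∑ k, lam x k * y (x + Pi.single k 1)
          ≤ ∑ k, lam x k * M (i + 1) :=
            Finset.sum_le_sum fun k _ => mul_le_mul_of_nonneg_left (hy' k) (hlam x k)
        _ = (∑ k, lam x k) * M (i + 1) := by rw [Finset.sum_mul]
    by_cases hc : y x ≤ M (i + 1)
    · nlinarith [hy0 x, hLamPos i]
    · push_neg at hc
      have hyx : y x ≤ 0 := by nlinarith
      exact absurd (hM0 (i + 1)) (not_le.mpr (by linarith))
  -- level inequality
  have key2 : ∀ i, (ζ + Lam i) * M i ≤ Lam i * M (i + 1) := by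
    intro i
    have hpos : 0 < ζ + Lam i := by have := hLamPos i; linarith
    have hMle : M i ≤ Lam i * M (i + 1) / (ζ + Lam i) := by
      apply csSup_le (hsne i)
      rintro r ⟨x, hx, rfl⟩
      rw [le_div_iff₀ hpos, mul_comm]
      exact key i x hx
    calc (ζ + Lam i) * M i ≤ (ζ + Lam i) * (Lam i * M (i + 1) / (ζ + Lam i)) :=
          mul_le_mul_of_nonneg_left hMle hpos.le
      _ = Lam i * M (i + 1) := by field_simp
  have hmono : ∀ i, M i ≤ M (i + 1) := by
    intro i
    have h := key2 i
    have hΛ := hLamPos i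
    nlinarith [hM0 i]
  have hmono' : ∀ n j, M n ≤ M (n + j) := by
    intro n j
    induction j with
    | zero => rfl
    | succ j ih => exact ih.trans (hmono (n + j))
  -- growth estimate
  have grow : ∀ n j, M n + ζ * M n * ∑ i ∈ Finset.range j, 1 / Lam (n + i) ≤ M (n + j) := by
    intro n j
    induction j with
    | zero => simp
    | succ j ih =>
      have h := key2 (n + j)
      have hΛ := hLamPos (n + j)
      have hMn := hmono' n j
      have hdiv : ζ * M n / Lam (n + j) ≤ M (n + j + 1) - M (n + j) := by
        rw [div_le_iff₀ hΛ]
        nlinarith [hM0 n]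
      have : M (n + j) + ζ * M n / Lam (n + j) ≤ M (n + j + 1) := by linarith
      rw [Finset.sum_range_succ]
      have : M n + ζ * M n * ∑ i ∈ Finset.range j, 1 / Lam (n + i)
          + ζ * M n / Lam (n + j) ≤ M (n + j + 1) := by linarith
      calc M n + ζ * M n * (∑ i ∈ Finset.range j, 1 / Lam (n + i) + 1 / Lam (n + j))
          = M n + ζ * M n * ∑ i ∈ Finset.range j, 1 / Lam (n + i)
            + ζ * M n / Lam (n + j) := by ring
        _ ≤ M (n + j + 1) := this
  -- conclude M n = 0 for all n
  have hMzero : ∀ n, M n = 0 := by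
    intro n
    by_contra h
    have hpos : 0 < M n := lt_of_le_of_ne (hM0 n) (Ne.symm h)
    -- partial sums are bounded
    have hbound : ∀ m, ∑ i ∈ Finset.range m, 1 / Lam i
        ≤ ∑ i ∈ Finset.range n, 1 / Lam i + (1 - M n) / (ζ * M n) := by
      intro m
      have hcoef : 0 < ζ * M n := mul_pos hζ hpos
      rcases le_or_gt m n with hmn | hmn
      · have h1 : ∑ i ∈ Finset.range m, 1 / Lam i ≤ ∑ i ∈ Finset.range n, 1 / Lam i := by
          apply Finset.sum_le_sum_of_subset_of_nonneg
          · exact Finset.range_subset_range.mpr hmn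
          · intro i _ _
            have := hLamPos i
            positivity
        have h2 : 0 ≤ (1 - M n) / (ζ * M n) :=
          div_nonneg (by linarith [hM1 n]) hcoef.le
        linarith
      · obtain ⟨j, rfl⟩ : ∃ j, m = n + j := ⟨m - n, by omega⟩
        have hsplit : ∑ i ∈ Finset.range (n + j), 1 / Lam i
            = ∑ i ∈ Finset.range n, 1 / Lam i + ∑ i ∈ Finset.range j, 1 / Lam (n + i) :=
          Finset.sum_range_add _ n j
        have hg := grow n j
        have hub := hM1 (n + j)
        have htail : ∑ i ∈ Finset.range j, 1 / Lam (n + i) ≤ (1 - M n) / (ζ * M n) := by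
          rw [le_div_iff₀ hcoef]
          nlinarith
        linarith
    obtain ⟨m, hm⟩ := (tendsto_atTop.mp hreg
      (∑ i ∈ Finset.range n, 1 / Lam i + (1 - M n) / (ζ * M n) + 1)).exists
    have := hbound m
    linarith
  intro x
  have h1 := hle x
  rw [hMzero] at h1
  exact le_antisymm h1 (hy0 x)
end

section
/- Level-wise inequality (equation (9) in the proof of Theorem 1): Let ζ > 0 and let y : ℕ^d → ℝ satisfy 0 ≤ y(x) ≤ 1 for all x and the equations (ζ + S(x))·y(x) = Σ_{k=1}^d λ(x,k)·y(x + e_k) for all x ∈ ℕ^d. Fix i ∈ ℕ and assume the level supremum λ_i is finite. Then, writing y_i = sup_{x ∈ D_i} y(x), one has y_i ≤ y_{i+1} and ζ·y_i ≤ λ_i·(y_{i+1} − y_i). -/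
/-- Level-wise inequality (equation (9) in the proof of Theorem 1):
writing `yᵢ = sup_{x ∈ Dᵢ} y(x)` for the level suprema of a `[0,1]`-valued
solution of `(ζ + S(x))·y(x) = ∑ₖ λ(x,k)·y(x+eₖ)`, one has `yᵢ ≤ y_{i+1}` and
`ζ·yᵢ ≤ λᵢ·(y_{i+1} − yᵢ)` whenever the level supremum `λᵢ` is finite. -/
theorem levelwise_inequality
    (d : ℕ) (hd : 1 ≤ d)
    (lam : (Fin d → ℕ) → Fin d → ℝ)
    (hlam : ∀ x k, 0 ≤ lam x k)
    (ζ : ℝ) (hζ : 0 < ζ)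
    (y : (Fin d → ℕ) → ℝ)
    (hy0 : ∀ x, 0 ≤ y x) (hy1 : ∀ x, y x ≤ 1)
    (heq : ∀ x, (ζ + ∑ k, lam x k) * y x = ∑ k, lam x k * y (x + Pi.single k 1))
    (i : ℕ)
    (Lami : ℝ)
    (hLam : IsLUB {r : ℝ | ∃ x : Fin d → ℕ, (∑ k, x k) = i ∧ r = ∑ k, lam x k} Lami)
    (Y : ℕ → ℝ)
    (hY : ∀ j : ℕ, Y j = sSup {r : ℝ | ∃ x : Fin d → ℕ, (∑ k, x k) = j ∧ r = y x}) :
    Y i ≤ Y (i + 1) ∧ ζ * Y i ≤ Lami * (Y (i + 1) - Y i) := by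
  have hk0 : (0 : ℕ) < d := hd
  set k0 : Fin d := ⟨0, hk0⟩ with hk0def
  have hmem : ∀ j : ℕ, (∑ k, (Pi.single k0 j : Fin d → ℕ) k) = j := by
    intro j
    simp [Finset.sum_pi_single']
  have hbdd : ∀ j : ℕ, BddAbove {r : ℝ | ∃ x : Fin d → ℕ, (∑ k, x k) = j ∧ r = y x} := by
    intro j
    exact ⟨1, fun r hr => by obtain ⟨x, _, rfl⟩ := hr; exact hy1 x⟩
  have hYle : ∀ (j : ℕ) (x : Fin d → ℕ), (∑ k, x k) = j → y x ≤ Y j := by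
    intro j x hx
    rw [hY]
    exact le_csSup (hbdd j) ⟨x, hx, rfl⟩
  have hY0 : ∀ j : ℕ, 0 ≤ Y j := fun j =>
    le_trans (hy0 _) (hYle j (Pi.single k0 j) (hmem j))
  have hLam0 : 0 ≤ Lami := by
    have hx0 : (∑ k, (Pi.single k0 i : Fin d → ℕ) k) = i := hmem i
    have : (∑ k, lam (Pi.single k0 i) k) ≤ Lami :=
      hLam.1 ⟨Pi.single k0 i, hx0, rfl⟩
    have h0 : 0 ≤ ∑ k, lam (Pi.single k0 i) k :=
      Finset.sum_nonneg fun k _ => hlam _ k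
    linarith
  have hsum1 : ∀ (x : Fin d → ℕ) (k : Fin d),
      (∑ l, (x + Pi.single k 1 : Fin d → ℕ) l) = (∑ l, x l) + 1 := by
    intro x k
    simp [Pi.add_apply, Finset.sum_add_distrib, Finset.sum_pi_single']
  have key : ∀ x : Fin d → ℕ, (∑ k, x k) = i →
      (ζ + Lami) * y x ≤ Lami * Y (i + 1) := by
    intro x hx
    set S := ∑ k, lam x k with hS
    have hS0 : 0 ≤ S := Finset.sum_nonneg fun k _ => hlam x k
    have hSle : S ≤ Lami := hLam.1 ⟨x, hx, rfl⟩
    have h1 : (ζ + S) * y x ≤ S * Y (i + 1) := by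
      rw [heq x]
      calc ∑ k, lam x k * y (x + Pi.single k 1)
          ≤ ∑ k, lam x k * Y (i + 1) := by
            apply Finset.sum_le_sum
            intro k _
            exact mul_le_mul_of_nonneg_left
              (hYle (i + 1) _ (by rw [hsum1, hx])) (hlam x k)
        _ = S * Y (i + 1) := by rw [hS, Finset.sum_mul]
    have hyY : y x ≤ Y (i + 1) := by
      rcases eq_or_lt_of_le hS0 with h | h
      · have hz : ζ * y x ≤ 0 := by rw [← h] at h1; linarith [h1]
        nlinarith [hy0 x, hY0 (i + 1)]
      · nlinarith [hy0 x]
    nlinarith [hy0 x]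
  have hmain : (ζ + Lami) * Y i ≤ Lami * Y (i + 1) := by
    have hpos : 0 < ζ + Lami := by linarith
    have hYi : Y i ≤ Lami * Y (i + 1) / (ζ + Lami) := by
      rw [hY]
      apply Real.sSup_le
      · rintro r ⟨x, hx, rfl⟩
        rw [le_div_iff₀ hpos]
        linarith [key x hx]
      · exact div_nonneg (mul_nonneg hLam0 (hY0 _)) (le_of_lt hpos)
    calc (ζ + Lami) * Y i ≤ (ζ + Lami) * (Lami * Y (i + 1) / (ζ + Lami)) :=
          mul_le_mul_of_nonneg_left hYi (le_of_lt hpos)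
      _ = Lami * Y (i + 1) := by field_simp
  constructor
  · nlinarith [hY0 (i + 1)]
  · nlinarith
end

section
/- Unbounded growth of the level suprema (equation (10) in the proof of Theorem 1): Let ζ > 0 and let y : ℕ^d → ℝ satisfy 0 ≤ y(x) ≤ 1 for all x and the equations (ζ + S(x))·y(x) = Σ_{k=1}^d λ(x,k)·y(x + e_k) for all x ∈ ℕ^d. Write y_i = sup_{x ∈ D_i} y(x) and suppose each level supremum λ_j is finite and strictly positive. If y_{i₀} > 0 for some i₀ ∈ ℕ, then for every i > i₀ one has y_i ≥ y_{i₀}·(1 + ζ·Σ_{j=i₀}^{i−1} 1/λ_j); in particular, if Σ_{j=1}^∞ 1/λ_j = ∞ then sup_i y_i = ∞. -/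
open Filter

/-- Unbounded growth of the level suprema (equation (10) in the proof of
Theorem 1): if the level supremum `y_{i₀}` of a `[0,1]`-valued solution of
`(ζ + S(x))·y(x) = ∑ₖ λ(x,k)·y(x+eₖ)` is positive, then
`yᵢ ≥ y_{i₀}·(1 + ζ·∑_{j=i₀}^{i−1} 1/λⱼ)` for all `i > i₀`; in particular, if
`∑ⱼ 1/λⱼ = ∞` then `supᵢ yᵢ = ∞`. -/
theorem levelsup_growth
    (d : ℕ) (hd : 1 ≤ d)
    (lam : (Fin d → ℕ) → Fin d → ℝ)
    (hlam : ∀ x k, 0 ≤ lam x k)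
    (ζ : ℝ) (hζ : 0 < ζ)
    (y : (Fin d → ℕ) → ℝ)
    (hy0 : ∀ x, 0 ≤ y x) (hy1 : ∀ x, y x ≤ 1)
    (heq : ∀ x, (ζ + ∑ k, lam x k) * y x = ∑ k, lam x k * y (x + Pi.single k 1))
    (Lam : ℕ → ℝ)
    (hLam : ∀ j : ℕ,
      IsLUB {r : ℝ | ∃ x : Fin d → ℕ, (∑ k, x k) = j ∧ r = ∑ k, lam x k} (Lam j))
    (hLamPos : ∀ j, 0 < Lam j)
    (Y : ℕ → ℝ)
    (hY : ∀ j : ℕ, Y j = sSup {r : ℝ | ∃ x : Fin d → ℕ, (∑ k, x k) = j ∧ r = y x})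
    (i₀ : ℕ) (hpos : 0 < Y i₀) :
    (∀ i : ℕ, i₀ < i → Y i₀ * (1 + ζ * ∑ j ∈ Finset.Ico i₀ i, 1 / Lam j) ≤ Y i) ∧
    (Tendsto (fun n => ∑ j ∈ Finset.range n, 1 / Lam j) atTop atTop →
      ¬ BddAbove (Set.range Y)) := by
  -- each level set image is nonempty and bounded above
  have hmem : ∀ j : ℕ, y (Pi.single ⟨0, hd⟩ j) ∈
      {r : ℝ | ∃ x : Fin d → ℕ, (∑ k, x k) = j ∧ r = y x} := by
    intro j
    exact ⟨Pi.single ⟨0, hd⟩ j, by simp, rfl⟩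
  have hne : ∀ j : ℕ, ({r : ℝ | ∃ x : Fin d → ℕ, (∑ k, x k) = j ∧ r = y x}).Nonempty :=
    fun j => ⟨_, hmem j⟩
  have hbdd : ∀ j : ℕ, BddAbove {r : ℝ | ∃ x : Fin d → ℕ, (∑ k, x k) = j ∧ r = y x} := by
    intro j
    refine ⟨1, ?_⟩
    rintro r ⟨x, -, rfl⟩
    exact hy1 x
  have hYle : ∀ (j : ℕ) (x : Fin d → ℕ), (∑ k, x k) = j → y x ≤ Y j := by
    intro j x hx
    rw [hY j]
    exact le_csSup (hbdd j) ⟨x, hx, rfl⟩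
  have hYnn : ∀ j : ℕ, 0 ≤ Y j := fun j =>
    le_trans (hy0 (Pi.single ⟨0, hd⟩ j)) (hYle j (Pi.single ⟨0, hd⟩ j) (by simp))
  -- the key step inequality
  have hstep : ∀ i : ℕ, (ζ + Lam i) * Y i ≤ Lam i * Y (i + 1) := by
    intro i
    have hΛ := hLamPos i
    have hB : Y i ≤ Lam i * Y (i + 1) / (ζ + Lam i) := by
      rw [hY i]
      refine csSup_le (hne i) ?_
      rintro r ⟨x, hx, rfl⟩
      rw [le_div_iff₀ (by linarith)]
      have hSnn : (0:ℝ) ≤ ∑ k, lam x k := Finset.sum_nonneg fun k _ => hlam x k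
      have hS : (∑ k, lam x k) ≤ Lam i := (hLam i).1 ⟨x, hx, rfl⟩
      have hup : ∀ k, y (x + Pi.single k 1) ≤ Y (i + 1) := by
        intro k
        refine hYle (i + 1) _ ?_
        simp [Finset.sum_add_distrib, hx]
      have hA : (ζ + ∑ k, lam x k) * y x ≤ (∑ k, lam x k) * Y (i + 1) := by
        rw [heq x, Finset.sum_mul]
        exact Finset.sum_le_sum fun k _ => mul_le_mul_of_nonneg_left (hup k) (hlam x k)
      have hY1 := hYnn (i + 1)
      have hx0 := hy0 x
      nlinarith [mul_nonneg hY1 (sub_nonneg.2 hS), mul_nonneg (sub_nonneg.2 hS) hx0,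
        mul_nonneg hζ.le (mul_nonneg hY1 (sub_nonneg.2 hS)),
        mul_le_mul_of_nonneg_left hA (by linarith : (0:ℝ) ≤ ζ + Lam i)]
    calc (ζ + Lam i) * Y i ≤ (ζ + Lam i) * (Lam i * Y (i + 1) / (ζ + Lam i)) :=
          mul_le_mul_of_nonneg_left hB (by linarith)
      _ = Lam i * Y (i + 1) := by field_simp
  -- growth by induction
  have aux : ∀ n : ℕ,
      Y i₀ * (1 + ζ * ∑ j ∈ Finset.Ico i₀ (i₀ + n), 1 / Lam j) ≤ Y (i₀ + n) := by
    intro n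
    induction n with
    | zero => simp
    | succ n ih =>
      set i := i₀ + n with hi
      have hle : i₀ ≤ i := Nat.le_add_right _ _
      have hΛ := hLamPos i
      have hσ : (0:ℝ) ≤ ∑ j ∈ Finset.Ico i₀ i, 1 / Lam j :=
        Finset.sum_nonneg fun j _ => (one_div_pos.mpr (hLamPos j)).le
      have hkey : Y i + ζ / Lam i * Y i ≤ Y (i + 1) := by
        have h := hstep i
        have h2 : (ζ + Lam i) * Y i / Lam i ≤ Y (i + 1) := by
          rw [div_le_iff₀ hΛ]; linarith
        calc Y i + ζ / Lam i * Y i = (ζ + Lam i) * Y i / Lam i := by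
              field_simp; ring
          _ ≤ Y (i + 1) := h2
      have hYi : Y i₀ ≤ Y i := by nlinarith [mul_nonneg (mul_nonneg hpos.le hζ.le) hσ]
      have hsum : ∑ j ∈ Finset.Ico i₀ (i + 1), 1 / Lam j
          = (∑ j ∈ Finset.Ico i₀ i, 1 / Lam j) + 1 / Lam i :=
        Finset.sum_Ico_succ_top hle _
      rw [show i₀ + (n + 1) = i + 1 by omega, hsum]
      have hmul : ζ / Lam i * Y i₀ ≤ ζ / Lam i * Y i :=
        mul_le_mul_of_nonneg_left hYi (by positivity)
      have hexp : Y i₀ * (1 + ζ * ((∑ j ∈ Finset.Ico i₀ i, 1 / Lam j) + 1 / Lam i))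
          = Y i₀ * (1 + ζ * ∑ j ∈ Finset.Ico i₀ i, 1 / Lam j) + ζ / Lam i * Y i₀ := by
        ring
      rw [hexp]
      linarith
  have main : ∀ i : ℕ, i₀ ≤ i →
      Y i₀ * (1 + ζ * ∑ j ∈ Finset.Ico i₀ i, 1 / Lam j) ≤ Y i := by
    intro i hi
    obtain ⟨n, rfl⟩ := Nat.exists_eq_add_of_le hi
    exact aux n
  refine ⟨fun i hi => main i hi.le, ?_⟩
  intro hT ⟨M, hM⟩
  have hMY : ∀ i, Y i ≤ M := fun i => hM ⟨i, rfl⟩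
  set T : ℕ → ℝ := fun n => ∑ j ∈ Finset.range n, 1 / Lam j with hTdef
  have hC : ∀ᶠ i in atTop, T i₀ + (M - Y i₀) / (Y i₀ * ζ) + 1 < T i :=
    hT.eventually (eventually_gt_atTop _)
  obtain ⟨i, hiC, hii⟩ := (hC.and (eventually_ge_atTop i₀)).exists
  have hsum : ∑ j ∈ Finset.Ico i₀ i, 1 / Lam j = T i - T i₀ :=
    Finset.sum_Ico_eq_sub _ hii
  have h1 := main i hii
  rw [hsum] at h1
  have hcanc : Y i₀ * ζ * ((M - Y i₀) / (Y i₀ * ζ)) = M - Y i₀ :=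
    mul_div_cancel₀ _ (by positivity)
  have h2 : Y i₀ * ζ * (T i - T i₀) > M - Y i₀ + Y i₀ * ζ := by
    nlinarith [mul_pos hpos hζ]
  have := hMY i
  nlinarith
end

section
/- Backward Laplace-domain recursion (Corollary 1, backward part): Fix B ∈ ℕ^d and let Q : ℕ^d → (ℝ → ℝ) be a family of functions with Q_x identically 0 whenever x ≤ B fails, such that for each x ≤ B, Q_x is differentiable on [0,∞), satisfies 0 ≤ Q_x(t) ≤ 1 for all t ≥ 0, has initial value Q_x(0) = 1 if x = B and Q_x(0) = 0 otherwise, and solves the Chapman–Kolmogorov backward system d/dt Q_x(t) = Σ_{k=1}^d λ(x, k)·Q_{x + e_k}(t) − S(x)·Q_x(t) for all t ≥ 0. Then for every s > 0, the improper integral g_x(s) = ∫₀^∞ e^{−st} Q_x(t) dt converges for every x ≤ B and satisfies (s + S(x))·g_x(s) = [x = B] + Σ_{k=1}^d λ(x, k)·g_{x + e_k}(s), where g_{x + e_k}(s) = 0 whenever x + e_k ≤ B fails; equivalently, g_B(s) = 1/(s + S(B)) and, for x ≤ B with x ≠ B, g_x(s) = Σ_{k=1}^d (λ(x, k)/(s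 + S(x)))·g_{x + e_k}(s). -/
/-!
Multiplying the backward equation for `Q_x` by `e^{-st}` and integrating over `(0, ∞)`,
integration by parts turns the left side into `s·g_x(s) - Q_x(0)`, because `e^{-st} Q_x(t)`
vanishes at infinity for bounded `Q_x`; the right side is linear in the `Q_y`, each of whose
Laplace integrals converges by domination with `e^{-st}`. The last two identities are the
solved forms of the resulting recursion, using that `Q_{B + e_k} ≡ 0`.
-/

open MeasureTheory Set Filter Topology Real

noncomputable def laplace (f : ℝ → ℝ) (s : ℝ) : ℝ :=
  ∫ t in Ioi 0, exp (-s * t) * f t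

theorem hasDerivAt_exp_neg_mul (s t : ℝ) :
    HasDerivAt (fun u => exp (-s * u)) (-s * exp (-s * t)) t := by
  simpa [mul_comm] using ((hasDerivAt_id t).const_mul (-s)).exp

theorem integrableOn_exp_neg_mul_of_abs_le {f : ℝ → ℝ} {s C : ℝ} (hs : 0 < s)
    (hf : ContinuousOn f (Ioi 0)) (hC : ∀ t, 0 < t → |f t| ≤ C) :
    IntegrableOn (fun t => exp (-s * t) * f t) (Ioi 0) := by
  refine ((exp_neg_integrableOn_Ioi 0 hs).const_mul C).mono' ?_ ?_
  · exact ((by fun_prop : Continuous fun t => exp (-s * t)).continuousOn.mul hf)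
      |>.aestronglyMeasurable measurableSet_Ioi
  · filter_upwards [ae_restrict_mem measurableSet_Ioi] with t ht
    rw [norm_mul, norm_of_nonneg (exp_pos _).le, mul_comm, Real.norm_eq_abs]
    exact mul_le_mul_of_nonneg_right (hC t ht) (exp_pos _).le

theorem tendsto_exp_neg_mul_mul_atTop {f : ℝ → ℝ} {s C : ℝ} (hs : 0 < s)
    (hC : ∀ t, 0 ≤ t → |f t| ≤ C) :
    Tendsto (fun t => exp (-s * t) * f t) atTop (𝓝 0) := by
  refine Tendsto.zero_mul_isBoundedUnder_le ?_ ⟨C, eventually_map.2 ?_⟩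
  · exact tendsto_exp_atBot.comp (tendsto_id.const_mul_atTop_of_neg (neg_neg_of_pos hs))
  · filter_upwards [eventually_ge_atTop 0] with t ht
    exact hC t ht

theorem laplace_deriv {f f' : ℝ → ℝ} {s C : ℝ} (hs : 0 < s)
    (hf : ∀ t, 0 ≤ t → HasDerivWithinAt f (f' t) (Ici 0) t) (hC : ∀ t, 0 ≤ t → |f t| ≤ C)
    (hf' : IntegrableOn (fun t => exp (-s * t) * f' t) (Ioi 0)) :
    laplace f' s = s * laplace f s - f 0 := by
  have hcont : ContinuousOn f (Ici 0) := fun t ht => (hf t ht).continuousWithinAt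
  have hint := integrableOn_exp_neg_mul_of_abs_le hs (hcont.mono Ioi_subset_Ici_self)
    fun t ht => hC t ht.le
  have h_zero : Tendsto (fun t => exp (-s * t) * f t) (𝓝[>] 0) (𝓝 (f 0)) := by
    have : ContinuousWithinAt (fun t => exp (-s * t) * f t) (Ici 0) 0 :=
      (hasDerivAt_exp_neg_mul s 0).continuousAt.continuousWithinAt.mul (hcont 0 self_mem_Ici)
    simpa using this.tendsto.mono_left (nhdsWithin_mono 0 Ioi_subset_Ici_self)
  have hparts := integral_Ioi_mul_deriv_eq_deriv_mul (a := 0)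
    (fun t _ => hasDerivAt_exp_neg_mul s t)
    (fun t ht => (hf t (le_of_lt ht)).hasDerivAt (Ici_mem_nhds ht)) hf'
    (by simp only [Pi.mul_def, mul_assoc]; exact hint.const_mul (-s))
    h_zero (tendsto_exp_neg_mul_mul_atTop hs hC)
  simp only [mul_assoc, integral_const_mul] at hparts
  unfold laplace
  linarith

theorem mul_sum_mul_sub_mul {ι R : Type*} [CommRing R] (I : Finset ι) (a x : ι → R) (b c y : R) :
    c * (∑ i ∈ I, a i * x i - b * y) = ∑ i ∈ I, a i * (c * x i) - b * (c * y) := by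
  simp only [mul_sub, Finset.mul_sum, mul_left_comm c]

section LinearCombination

variable {ι : Type*} {I : Finset ι} {a : ι → ℝ} {g : ι → ℝ → ℝ} {b s : ℝ} {f : ℝ → ℝ}

theorem integrableOn_exp_neg_mul_sum_sub
    (hg : ∀ i ∈ I, IntegrableOn (fun t => exp (-s * t) * g i t) (Ioi 0))
    (hf : IntegrableOn (fun t => exp (-s * t) * f t) (Ioi 0)) :
    IntegrableOn (fun t => exp (-s * t) * (∑ i ∈ I, a i * g i t - b * f t)) (Ioi 0) := by
  simp only [mul_sum_mul_sub_mul]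
  exact (integrable_finsetSum _ fun i hi => (hg i hi).const_mul (a i)).sub (hf.const_mul b)

theorem laplace_sum_sub
    (hg : ∀ i ∈ I, IntegrableOn (fun t => exp (-s * t) * g i t) (Ioi 0))
    (hf : IntegrableOn (fun t => exp (-s * t) * f t) (Ioi 0)) :
    laplace (fun t => ∑ i ∈ I, a i * g i t - b * f t) s =
      ∑ i ∈ I, a i * laplace (g i) s - b * laplace f s := by
  have hsum := integrable_finsetSum _ fun i hi => (hg i hi).const_mul (a i)
  simp only [laplace, mul_sum_mul_sub_mul]
  rw [integral_sub hsum (hf.const_mul b),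
    integral_finsetSum _ fun i hi => (hg i hi).const_mul (a i)]
  simp only [integral_const_mul]

end LinearCombination

theorem backward_laplace_recursion_general
    (d : ℕ)
    (lam : (Fin d → ℕ) → Fin d → ℝ)
    (hlam : ∀ x k, 0 ≤ lam x k)
    (B : Fin d → ℕ)
    (Q : (Fin d → ℕ) → ℝ → ℝ)
    (hQzero : ∀ x : Fin d → ℕ, ¬ x ≤ B → ∀ t : ℝ, Q x t = 0)
    (hbound : ∀ x : Fin d → ℕ, x ≤ B → ∀ t : ℝ, 0 ≤ t → 0 ≤ Q x t ∧ Q x t ≤ 1)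
    (hinit : ∀ x : Fin d → ℕ, x ≤ B → Q x 0 = if x = B then 1 else 0)
    (hderiv : ∀ x : Fin d → ℕ, x ≤ B → ∀ t : ℝ, 0 ≤ t →
      HasDerivWithinAt (Q x)
        ((∑ k, lam x k * Q (x + Pi.single k 1) t) - (∑ k, lam x k) * Q x t)
        (Set.Ici 0) t)
    (s : ℝ) (hs : 0 < s) :
    ∀ x : Fin d → ℕ, x ≤ B →
      IntegrableOn (fun t => Real.exp (-s * t) * Q x t) (Set.Ioi 0) ∧
      (s + ∑ k, lam x k) * (∫ t in Set.Ioi (0 : ℝ), Real.exp (-s * t) * Q x t) =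
        (if x = B then 1 else 0) +
          ∑ k, lam x k *
            ∫ t in Set.Ioi (0 : ℝ), Real.exp (-s * t) * Q (x + Pi.single k 1) t ∧
      (x = B →
        (∫ t in Set.Ioi (0 : ℝ), Real.exp (-s * t) * Q x t) =
          1 / (s + ∑ k, lam B k)) ∧
      (x ≠ B →
        (∫ t in Set.Ioi (0 : ℝ), Real.exp (-s * t) * Q x t) =
          ∑ k, (lam x k / (s + ∑ j, lam x j)) *
            ∫ t in Set.Ioi (0 : ℝ), Real.exp (-s * t) * Q (x + Pi.single k 1) t) := by
  have habs : ∀ y t, 0 ≤ t → |Q y t| ≤ 1 := fun y t ht => by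
    by_cases hy : y ≤ B
    · exact abs_le.2 ⟨by linarith [(hbound y hy t ht).1], (hbound y hy t ht).2⟩
    · simp [hQzero y hy t]
  have hcont : ∀ y, ContinuousOn (Q y) (Ioi 0) := fun y => by
    by_cases hy : y ≤ B
    · exact fun t ht => (hderiv y hy t (le_of_lt ht)).continuousWithinAt.mono Ioi_subset_Ici_self
    · simpa [funext (hQzero y hy)] using continuousOn_const
  have hint : ∀ y, IntegrableOn (fun t => exp (-s * t) * Q y t) (Ioi 0) := fun y =>
    integrableOn_exp_neg_mul_of_abs_le hs (hcont y) fun t ht => habs y t ht.le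
  intro x hx
  have hrec : (s + ∑ k, lam x k) * laplace (Q x) s =
      (if x = B then 1 else 0) + ∑ k, lam x k * laplace (Q (x + Pi.single k 1)) s := by
    have hlap := laplace_deriv hs (hderiv x hx) (habs x)
      (integrableOn_exp_neg_mul_sum_sub (fun k _ => hint _) (hint x))
    rw [laplace_sum_sub (fun k _ => hint _) (hint x), hinit x hx] at hlap
    linarith
  have hS : 0 < s + ∑ k, lam x k :=
    add_pos_of_pos_of_nonneg hs (Finset.sum_nonneg fun k _ => hlam x k)
  refine ⟨hint x, hrec, fun hxB => ?_, fun hxB => ?_⟩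
  · subst hxB
    have hout : ∀ k, laplace (Q (x + Pi.single k 1)) s = 0 := fun k => by
      have hout_k : ¬ x + Pi.single k 1 ≤ x := fun h => by simpa using h k
      simp [laplace, hQzero _ hout_k]
    simp only [if_true, hout, mul_zero, Finset.sum_const_zero, add_zero] at hrec
    exact eq_one_div_of_mul_eq_one_right hrec
  · simp only [if_neg hxB, zero_add] at hrec
    change laplace (Q x) s = ∑ k, lam x k / _ * laplace (Q (x + Pi.single k 1)) s
    simp only [div_mul_eq_mul_div, ← Finset.sum_div]
    rw [← hrec, mul_div_cancel_left₀ _ hS.ne']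

/-- Backward Laplace-domain recursion (Corollary 1, backward part): the Laplace
transforms `g_x(s) = ∫₀^∞ e^{−st} Q_x(t) dt` of a bounded solution (supported on
`x ≤ B`) of the Chapman–Kolmogorov backward equations with initial condition
`Q_x(0) = [x = B]` exist for every `s > 0` and satisfy
`(s + S(x))·g_x(s) = [x = B] + ∑_k λ(x,k)·g_{x+eₖ}(s)`. -/
theorem backward_laplace_recursion
    (d : ℕ) (hd : 1 ≤ d)
    (lam : (Fin d → ℕ) → Fin d → ℝ)
    (hlam : ∀ x k, 0 ≤ lam x k)
    (B : Fin d → ℕ)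
    (Q : (Fin d → ℕ) → ℝ → ℝ)
    (hQzero : ∀ x : Fin d → ℕ, ¬ x ≤ B → ∀ t : ℝ, Q x t = 0)
    (hbound : ∀ x : Fin d → ℕ, x ≤ B → ∀ t : ℝ, 0 ≤ t → 0 ≤ Q x t ∧ Q x t ≤ 1)
    (hinit : ∀ x : Fin d → ℕ, x ≤ B → Q x 0 = if x = B then 1 else 0)
    (hderiv : ∀ x : Fin d → ℕ, x ≤ B → ∀ t : ℝ, 0 ≤ t →
      HasDerivWithinAt (Q x)
        ((∑ k, lam x k * Q (x + Pi.single k 1) t) - (∑ k, lam x k) * Q x t)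
        (Set.Ici 0) t)
    (s : ℝ) (hs : 0 < s) :
    ∀ x : Fin d → ℕ, x ≤ B →
      IntegrableOn (fun t => Real.exp (-s * t) * Q x t) (Set.Ioi 0) ∧
      (s + ∑ k, lam x k) * (∫ t in Set.Ioi (0 : ℝ), Real.exp (-s * t) * Q x t) =
        (if x = B then 1 else 0) +
          ∑ k, lam x k *
            ∫ t in Set.Ioi (0 : ℝ), Real.exp (-s * t) * Q (x + Pi.single k 1) t ∧
      (x = B →
        (∫ t in Set.Ioi (0 : ℝ), Real.exp (-s * t) * Q x t) =
          1 / (s + ∑ k, lam B k)) ∧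
      (x ≠ B →
        (∫ t in Set.Ioi (0 : ℝ), Real.exp (-s * t) * Q x t) =
          ∑ k, (lam x k / (s + ∑ j, lam x j)) *
            ∫ t in Set.Ioi (0 : ℝ), Real.exp (-s * t) * Q (x + Pi.single k 1) t) :=
  backward_laplace_recursion_general d lam hlam B Q hQzero hbound hinit hderiv s hs
end

section
/- Forward path-sum representation (first identity of equation (12)): Fix B ∈ ℕ^d and s > 0, and let f : {x ∈ ℕ^d : x ≤ B} → ℝ satisfy f(0) = 1/(s + S(0)) and, for every x ≤ B with x ≠ 0, the forward recursion f(x) = Σ_{k : x_k ≥ 1} (λ(x − e_k, k)/(s + S(x)))·f(x − e_k). Then for every x ≤ B, f(x) = (1/(s + S(0))) · Σ_{p ∈ 𝒫(0, x)} ∏_{i=2}^{n(p)} λ(p_{i−1}, ℐ_{i−1}(p)) / (s + S(p_i)), where the sum ranges over all paths p = (p_1, …, p_{n(p)}) from 0 to x. -/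
/-- `IsPath u v p` : the finite sequence of lattice points `p = (p₁, …, pₙ)` in
`ℕ^d` is a path from `u` to `v`, i.e. `p₁ = u`, `pₙ = v`, and each increment
`p_{i+1} − p_i` is a standard basis vector `eₖ`. -/
def IsPath {d : ℕ} (u v : Fin d → ℕ) (p : List (Fin d → ℕ)) : Prop :=
  p ≠ [] ∧ p.getD 0 0 = u ∧ p.getD (p.length - 1) 0 = v ∧
    ∀ i : ℕ, i + 1 < p.length →
      ∃ k : Fin d, p.getD (i + 1) 0 = p.getD i 0 + Pi.single k 1


/-!
Deleting the last step of a path from `0` to `x ≠ 0` is a bijection onto the disjoint union,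
over the `k` with `x k ≥ 1`, of the paths from `0` to `x - eₖ`, and it divides the weight of the
path by the weight `λ(x - eₖ, k) / (s + S(x))` of that step. Hence the path sum obeys the same
forward recursion as `f`, with value `1` at `0`, and the two agree by well-founded induction on
`x` in the product order.
-/

open Finset

section PathSum

variable {d : ℕ}

theorem sub_single_add_single {x : Fin d → ℕ} {k : Fin d} (hk : 1 ≤ x k) :
    x - Pi.single k 1 + Pi.single k 1 = x := by
  funext j
  rcases eq_or_ne j k with rfl | hj
  · simp only [Pi.add_apply, Pi.sub_apply, Pi.single_eq_same]
    omega
  · simp [hj]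

theorem sub_single_lt {x : Fin d → ℕ} {k : Fin d} (hk : 1 ≤ x k) : x - Pi.single k 1 < x := by
  refine lt_of_le_of_ne tsub_le_self fun h => ?_
  have := congrFun h k
  simp only [Pi.sub_apply, Pi.single_eq_same] at this
  omega

theorem sub_single_inj {x : Fin d → ℕ} {k k' : Fin d} (hk : 1 ≤ x k)
    (h : x - Pi.single k 1 = x - Pi.single k' 1) : k = k' := by
  by_contra hne
  have := congrFun h k
  simp [hne] at this
  omega

namespace IsPath

variable {u v y : Fin d → ℕ} {l : List (Fin d → ℕ)}

theorem singleton (u : Fin d → ℕ) : IsPath u u [u] :=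
  ⟨List.cons_ne_nil _ _, rfl, rfl, fun i hi => by simp at hi⟩

theorem right_unique {v' : Fin d → ℕ} (h : IsPath u v l) (h' : IsPath u v' l) : v = v' :=
  h.2.2.1.symm.trans h'.2.2.1

theorem append_singleton (h : IsPath u y l) (k : Fin d) :
    IsPath u (y + Pi.single k 1) (l ++ [y + Pi.single k 1]) := by
  obtain ⟨hne, hfirst, hlast, hstep⟩ := h
  have hlen : 0 < l.length := List.length_pos_iff.mpr hne
  refine ⟨by simp, by rwa [List.getD_append _ _ _ _ hlen], ?_, fun i hi => ?_⟩
  · simp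
  · rw [List.length_append, List.length_singleton] at hi
    rcases Nat.lt_or_ge (i + 1) l.length with hi' | hi'
    · rw [List.getD_append _ _ _ _ hi', List.getD_append _ _ _ _ (by omega)]
      exact hstep i hi'
    · obtain rfl : i = l.length - 1 := by omega
      refine ⟨k, ?_⟩
      rw [Nat.sub_add_cancel hlen, List.getD_append_right _ _ _ _ le_rfl,
        List.getD_append _ _ _ _ (by omega), hlast]
      simp

theorem dropLast (h : IsPath u v l) (hlen : 2 ≤ l.length) :
    IsPath u (l.getD (l.length - 2) 0) l.dropLast := by
  obtain ⟨-, hfirst, -, hstep⟩ := h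
  have hget : ∀ i < l.length - 1, l.dropLast.getD i 0 = l.getD i 0 := fun i hi => by
    rw [List.getD_eq_getElem _ _ (by simpa using hi), List.getD_eq_getElem _ _ (by omega),
      List.getElem_dropLast]
  refine ⟨List.length_pos_iff.mp (by simp; omega), by rw [hget 0 (by omega), hfirst], ?_,
    fun i hi => ?_⟩
  · rw [List.length_dropLast, hget _ (by omega)]
    rfl
  · rw [List.length_dropLast] at hi
    rw [hget _ hi, hget _ (by omega)]
    exact hstep i (by omega)

theorem eq_singleton_or_eq_append (h : IsPath u v l) :
    (l = [u] ∧ u = v) ∨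
      ∃ y k l', l = l' ++ [v] ∧ IsPath u y l' ∧ v = y + Pi.single k 1 := by
  have hpos : 0 < l.length := List.length_pos_iff.mpr h.1
  by_cases hlen : l.length = 1
  · obtain ⟨a, rfl⟩ := List.length_eq_one_iff.mp hlen
    obtain rfl : a = u := h.2.1
    exact Or.inl ⟨rfl, h.2.2.1⟩
  · obtain ⟨k, hk⟩ := h.2.2.2 (l.length - 2) (by omega)
    refine Or.inr ⟨_, k, _, ?_, h.dropLast (by omega), ?_⟩
    · conv_lhs => rw [← List.dropLast_append_getLast h.1]
      rw [List.getLast_eq_getElem, ← List.getD_eq_getElem _ 0, h.2.2.1]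
    · rw [← hk, ← h.2.2.1]
      congr 1
      omega

end IsPath

abbrev LatticePath (x : Fin d → ℕ) : Type := {l : List (Fin d → ℕ) // IsPath 0 x l}

namespace LatticePath

instance : Unique (LatticePath (0 : Fin d → ℕ)) where
  default := ⟨[0], IsPath.singleton 0⟩
  uniq := fun ⟨l, hl⟩ => by
    rcases hl.eq_singleton_or_eq_append with ⟨rfl, -⟩ | ⟨y, k, l', -, -, hzero⟩
    · rfl
    · have := congrFun hzero k
      simp at this

variable {x : Fin d → ℕ}

def snoc (a : Σ k : {k // 1 ≤ x k}, LatticePath (x - Pi.single k.1 1)) : LatticePath x :=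
  ⟨a.2.1 ++ [x], by simpa only [sub_single_add_single a.1.2] using a.2.2.append_singleton a.1.1⟩

theorem snoc_bijective (hx : x ≠ 0) : Function.Bijective (snoc (x := x)) := by
  constructor
  · rintro ⟨⟨k, hk⟩, ⟨l, hl⟩⟩ ⟨⟨k', hk'⟩, ⟨l', hl'⟩⟩ h
    obtain rfl : l = l' := List.append_cancel_right (congrArg Subtype.val h)
    obtain rfl : k = k' := sub_single_inj hk (hl.right_unique hl')
    rfl
  · rintro ⟨l, hl⟩
    rcases hl.eq_singleton_or_eq_append with ⟨-, h0⟩ | ⟨y, k, l', rfl, hl', rfl⟩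
    · exact absurd h0.symm hx
    · exact ⟨⟨⟨k, by simp⟩, ⟨l', by rwa [add_tsub_cancel_right]⟩⟩, rfl⟩

noncomputable def snocEquiv (hx : x ≠ 0) :
    (Σ k : {k // 1 ≤ x k}, LatticePath (x - Pi.single k.1 1)) ≃ LatticePath x :=
  Equiv.ofBijective _ (snoc_bijective hx)

instance finite (x : Fin d → ℕ) : Finite (LatticePath x) := by
  induction x using WellFoundedLT.induction with
  | _ x ih =>
    rcases eq_or_ne x 0 with rfl | hx
    · infer_instance
    · have := fun k : {k // 1 ≤ x k} => ih _ (sub_single_lt k.2)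
      exact Finite.of_equiv _ (snocEquiv hx)

end LatticePath

section Weights

variable (lam : (Fin d → ℕ) → Fin d → ℝ) (s : ℝ)

noncomputable def stepWeight (y z : Fin d → ℕ) : ℝ :=
  (∑ k, if z = y + Pi.single k 1 then lam y k else 0) / (s + ∑ k, lam z k)

noncomputable def pathWeight (l : List (Fin d → ℕ)) : ℝ :=
  ∏ i ∈ range (l.length - 1), stepWeight lam s (l.getD i 0) (l.getD (i + 1) 0)

noncomputable def pathSum (x : Fin d → ℕ) : ℝ :=
  ∑' p : LatticePath x, pathWeight lam s p.1

theorem stepWeight_add_single (y : Fin d → ℕ) (k : Fin d) :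
    stepWeight lam s y (y + Pi.single k 1) = lam y k / (s + ∑ j, lam (y + Pi.single k 1) j) := by
  rw [stepWeight, sum_eq_single k (fun j _ hj => if_neg fun h => hj ?_) (by simp), if_pos rfl]
  have := congrFun (add_left_cancel h) j
  simp [hj] at this

theorem pathWeight_append_singleton {u y : Fin d → ℕ} {l : List (Fin d → ℕ)} (h : IsPath u y l)
    (z : Fin d → ℕ) : pathWeight lam s (l ++ [z]) = pathWeight lam s l * stepWeight lam s y z := by
  have hlen : 0 < l.length := List.length_pos_iff.mpr h.1
  have hget : ∀ i < l.length, (l ++ [z]).getD i 0 = l.getD i 0 := fun i hi =>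
    List.getD_append _ _ _ _ hi
  rw [pathWeight, pathWeight, List.length_append, List.length_singleton, Nat.add_sub_cancel,
    ← Nat.sub_add_cancel hlen, prod_range_succ, Nat.sub_add_cancel hlen]
  congr 1
  · refine prod_congr rfl fun i hi => ?_
    rw [mem_range] at hi
    rw [hget i (by omega), hget (i + 1) (by omega)]
  · rw [hget _ (by omega), h.2.2.1, List.getD_append_right _ _ _ _ le_rfl]
    simp

theorem pathSum_zero : pathSum lam s 0 = 1 := by
  rw [pathSum, (hasSum_unique _).tsum_eq]
  exact prod_range_zero _

theorem pathSum_eq_sum {x : Fin d → ℕ} (hx : x ≠ 0) :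
    pathSum lam s x = ∑ k ∈ univ.filter (fun k => 1 ≤ x k),
      lam (x - Pi.single k 1) k / (s + ∑ j, lam x j) * pathSum lam s (x - Pi.single k 1) := by
  classical
  let : ∀ y : Fin d → ℕ, Fintype (LatticePath y) := fun y => Fintype.ofFinite _
  have hlast (k : {k // 1 ≤ x k}) (p : LatticePath (x - Pi.single k.1 1)) :
      pathWeight lam s (LatticePath.snoc ⟨k, p⟩).1 =
        lam (x - Pi.single k.1 1) k / (s + ∑ j, lam x j) * pathWeight lam s p.1 := by
    have hstep := stepWeight_add_single lam s (x - Pi.single k.1 1) k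
    rw [sub_single_add_single k.2] at hstep
    rw [LatticePath.snoc, pathWeight_append_singleton lam s p.2, hstep, mul_comm]
  calc pathSum lam s x
      = ∑ k : {k // 1 ≤ x k}, ∑ p : LatticePath (x - Pi.single k.1 1),
          pathWeight lam s (LatticePath.snoc ⟨k, p⟩).1 := by
        rw [pathSum, ← (LatticePath.snocEquiv hx).tsum_eq, tsum_fintype, Fintype.sum_sigma]
        rfl
    _ = _ := by
        simp_rw [hlast, ← mul_sum]
        rw [sum_subtype (univ.filter fun k => 1 ≤ x k) (p := fun k => 1 ≤ x k)
          (F := inferInstance) (by simp)]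
        simp [pathSum, tsum_fintype]

end Weights

end PathSum

theorem forward_path_sum_general
    (d : ℕ)
    (lam : (Fin d → ℕ) → Fin d → ℝ)
    (B : Fin d → ℕ) (s : ℝ)
    (f : (Fin d → ℕ) → ℝ)
    (hf0 : f 0 = 1 / (s + ∑ k, lam 0 k))
    (hrec : ∀ x : Fin d → ℕ, x ≤ B → x ≠ 0 →
      f x = ∑ k ∈ Finset.univ.filter (fun k => 1 ≤ x k),
        (lam (x - Pi.single k 1) k / (s + ∑ j, lam x j)) * f (x - Pi.single k 1)) :
    ∀ x : Fin d → ℕ, x ≤ B →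
      f x = (1 / (s + ∑ k, lam 0 k)) *
        ∑' p : {l : List (Fin d → ℕ) // IsPath (0 : Fin d → ℕ) x l},
          ∏ i ∈ Finset.range (p.1.length - 1),
            (∑ k, if p.1.getD (i + 1) 0 = p.1.getD i 0 + Pi.single k 1 then
                lam (p.1.getD i 0) k else 0)
              / (s + ∑ k', lam (p.1.getD (i + 1) 0) k') := by
  suffices h : ∀ x, x ≤ B → f x = 1 / (s + ∑ k, lam 0 k) * pathSum lam s x from h
  intro x
  induction x using WellFoundedLT.induction with
  | _ x ih =>
    intro hxB
    rcases eq_or_ne x 0 with rfl | hx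
    · rw [hf0, pathSum_zero, mul_one]
    · rw [hrec x hxB hx, pathSum_eq_sum lam s hx, mul_sum]
      refine sum_congr rfl fun k hmem => ?_
      have hk : 1 ≤ x k := (mem_filter.mp hmem).2
      rw [ih _ (sub_single_lt hk) (tsub_le_self.trans hxB)]
      ring

/-- Forward path-sum representation (first identity of equation (12)): a solution
of the forward Laplace-domain recursion satisfies, for every `x ≤ B`,
`f(x) = (1/(s+S(0))) · ∑_{p ∈ 𝒫(0,x)} ∏_{i=2}^{n} λ(p_{i−1}, ℐ_{i−1})/(s+S(p_i))`.
The rate `λ(p_{i−1}, ℐ_{i−1})` attached to the unique step index is written as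
`∑ₖ [p_i = p_{i−1} + eₖ]·λ(p_{i−1},k)`. -/
theorem forward_path_sum
    (d : ℕ) (hd : 1 ≤ d)
    (lam : (Fin d → ℕ) → Fin d → ℝ)
    (hlam : ∀ x k, 0 ≤ lam x k)
    (B : Fin d → ℕ) (s : ℝ) (hs : 0 < s)
    (f : (Fin d → ℕ) → ℝ)
    (hf0 : f 0 = 1 / (s + ∑ k, lam 0 k))
    (hrec : ∀ x : Fin d → ℕ, x ≤ B → x ≠ 0 →
      f x = ∑ k ∈ Finset.univ.filter (fun k => 1 ≤ x k),
        (lam (x - Pi.single k 1) k / (s + ∑ j, lam x j)) * f (x - Pi.single k 1)) :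
    ∀ x : Fin d → ℕ, x ≤ B →
      f x = (1 / (s + ∑ k, lam 0 k)) *
        ∑' p : {l : List (Fin d → ℕ) // IsPath (0 : Fin d → ℕ) x l},
          ∏ i ∈ Finset.range (p.1.length - 1),
            (∑ k, if p.1.getD (i + 1) 0 = p.1.getD i 0 + Pi.single k 1 then
                lam (p.1.getD i 0) k else 0)
              / (s + ∑ k', lam (p.1.getD (i + 1) 0) k') :=
  forward_path_sum_general d lam B s f hf0 hrec
end

section
/- Backward path-sum representation (second identity of equation (12)): Fix B ∈ ℕ^d and s > 0, assume λ(x, k) = 0 whenever x ≤ B but x + e_k ≤ B fails, and let g : {x ∈ ℕ^d : x ≤ B} → ℝ satisfy g(B) = 1/(s + S(B)) and, for every x ≤ B with x ≠ B, the backward recursion g(x) = Σ_{k=1}^d (λ(x, k)/(s + S(x)))·g(x + e_k). Then for every x ≤ B, g(x) = (1/(s + S(B))) · Σ_{p ∈ 𝒫(x, B)} ∏_{i=1}^{n(p)−1} λ(p_i, ℐ_i(p)) / (s + S(p_i)), where the sum ranges over all paths p = (p_1, …, p_{n(p)}) from x to B. -/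
namespace BackPathAux

variable {d : ℕ}

lemma single_ne_zero' (k : Fin d) : (Pi.single k 1 : Fin d → ℕ) ≠ 0 := by
  intro h
  have := congrFun h k
  simp at this

lemma single_inj {k k' : Fin d} (h : (Pi.single k 1 : Fin d → ℕ) = Pi.single k' 1) :
    k = k' := by
  by_contra hne
  have := congrFun h k
  simp [Pi.single_apply, hne, Ne.symm hne] at this

lemma path_step_le {u v : Fin d → ℕ} {p : List (Fin d → ℕ)} (hp : IsPath u v p) :
    ∀ j i, i + j < p.length → p.getD i 0 ≤ p.getD (i + j) 0 := by
  intro j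
  induction j with
  | zero => intro i _; exact le_refl _
  | succ j ih =>
    intro i h
    obtain ⟨k, hk⟩ := hp.2.2.2 (i + j) (by omega)
    calc p.getD i 0 ≤ p.getD (i + j) 0 := ih i (by omega)
      _ ≤ p.getD (i + j) 0 + Pi.single k 1 := le_add_of_nonneg_right (by positivity)
      _ = p.getD (i + j + 1) 0 := hk.symm
      _ = p.getD (i + (j + 1)) 0 := by ring_nf

lemma path_sum {u v : Fin d → ℕ} {p : List (Fin d → ℕ)} (hp : IsPath u v p) :
    ∀ i, i < p.length → ∑ k, p.getD i 0 k = (∑ k, u k) + i := by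
  intro i
  induction i with
  | zero => intro _; rw [hp.2.1]; omega
  | succ i ih =>
    intro h
    obtain ⟨k, hk⟩ := hp.2.2.2 i h
    rw [hk]
    have hsplit : ∑ j, ((p.getD i 0 + Pi.single k 1 : Fin d → ℕ)) j
        = (∑ j, p.getD i 0 j) + ∑ j, (Pi.single k 1 : Fin d → ℕ) j := by
      simp [Finset.sum_add_distrib]
    rw [hsplit, Finset.sum_pi_single', if_pos (Finset.mem_univ k), ih (by omega)]
    omega

lemma path_length {u v : Fin d → ℕ} {p : List (Fin d → ℕ)} (hp : IsPath u v p) :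
    (∑ k, u k) + (p.length - 1) = ∑ k, v k := by
  have hlen : 0 < p.length := List.length_pos_iff.2 hp.1
  have := path_sum hp (p.length - 1) (by omega)
  rw [hp.2.2.1] at this
  omega

lemma path_mem_le {u v : Fin d → ℕ} {p : List (Fin d → ℕ)} (hp : IsPath u v p) :
    ∀ y ∈ p, y ≤ v := by
  intro y hy
  obtain ⟨i, hi, rfl⟩ := List.mem_iff_getElem.1 hy
  have h1 : p[i] = p.getD i 0 := (List.getD_eq_getElem p 0 hi).symm
  rw [h1]
  have := path_step_le hp (p.length - 1 - i) i (by omega)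
  have h2 : i + (p.length - 1 - i) = p.length - 1 := by omega
  rw [h2, hp.2.2.1] at this
  exact this

lemma paths_finite (u v : Fin d → ℕ) : Finite {l : List (Fin d → ℕ) // IsPath u v l} := by
  have hIcc : (Set.Icc (0 : Fin d → ℕ) v).Finite := Set.finite_Icc _ _
  haveI : Finite ↥(Set.Icc (0 : Fin d → ℕ) v) := hIcc.to_subtype
  have hT : {l : List ↥(Set.Icc (0 : Fin d → ℕ) v) | l.length ≤ (∑ k, v k) + 1}.Finite :=
    List.finite_length_le _ _
  have himg : {l : List (Fin d → ℕ) | IsPath u v l} ⊆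
      (List.map (Subtype.val)) '' {l : List ↥(Set.Icc (0 : Fin d → ℕ) v) | l.length ≤ (∑ k, v k) + 1} := by
    intro p hp
    refine ⟨p.attach.map (fun y => ⟨y.1, by simp [Set.mem_Icc]; exact path_mem_le hp y.1 y.2⟩), ?_, ?_⟩
    · simp only [Set.mem_setOf_eq, List.length_map, List.length_attach]
      have := path_length hp
      omega
    · simp
  have : {l : List (Fin d → ℕ) | IsPath u v l}.Finite :=
    Set.Finite.subset (Set.Finite.image _ hT) himg
  exact this.to_subtype

lemma path_self {v : Fin d → ℕ} {p : List (Fin d → ℕ)} (hp : IsPath v v p) : p = [v] := by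
  have hlen : 0 < p.length := List.length_pos_iff.2 hp.1
  have hl := path_length hp
  have hone : p.length = 1 := by omega
  obtain ⟨a, rfl⟩ := List.length_eq_one_iff.1 hone
  have := hp.2.1
  simp at this
  rw [this]

lemma path_single (v : Fin d → ℕ) : IsPath v v [v] := by
  refine ⟨by simp, by simp, by simp, ?_⟩
  intro i hi
  simp at hi

lemma cons_path {x y B : Fin d → ℕ} {k : Fin d} {l : List (Fin d → ℕ)}
    (hl : IsPath y B l) (hy : y = x + Pi.single k 1) : IsPath x B (x :: l) := by
  have hlen : 0 < l.length := List.length_pos_iff.2 hl.1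
  refine ⟨by simp, by simp, ?_, ?_⟩
  · have : (x :: l).length - 1 = (l.length - 1) + 1 := by simp; omega
    rw [this, List.getD_cons_succ]
    exact hl.2.2.1
  · intro i hi
    match i with
    | 0 =>
      refine ⟨k, ?_⟩
      rw [List.getD_cons_succ, List.getD_cons_zero]
      have h0 : l.getD 0 0 = y := hl.2.1
      rw [h0, hy]
    | Nat.succ j =>
      obtain ⟨k', hk'⟩ := hl.2.2.2 j (by simp at hi; omega)
      exact ⟨k', by simpa [List.getD_cons_succ] using hk'⟩

lemma tail_path {x B : Fin d → ℕ} {p : List (Fin d → ℕ)}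
    (hp : IsPath x B p) (hx : x ≠ B) :
    ∃ (k : Fin d) (l : List (Fin d → ℕ)), p = x :: l ∧
      IsPath (x + Pi.single k 1) B l := by
  obtain ⟨a, l, rfl⟩ := List.exists_cons_of_ne_nil hp.1
  have ha : a = x := by simpa using hp.2.1
  subst ha
  have hlne : l ≠ [] := by
    rintro rfl
    exact hx (by simpa using hp.2.2.1)
  have hlen : 0 < l.length := List.length_pos_iff.2 hlne
  obtain ⟨k, hk⟩ := hp.2.2.2 0 (by simp; omega)
  rw [List.getD_cons_succ, List.getD_cons_zero] at hk
  refine ⟨k, l, rfl, ?_, hk, ?_, ?_⟩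
  · exact hlne
  · have h1 : (a :: l).length - 1 = (l.length - 1) + 1 := by simp; omega
    have := hp.2.2.1
    rw [h1, List.getD_cons_succ] at this
    exact this
  · intro i hi
    obtain ⟨k', hk'⟩ := hp.2.2.2 (i + 1) (by simp; omega)
    exact ⟨k', by simpa [List.getD_cons_succ] using hk'⟩

end BackPathAux

/-- Backward path-sum representation (second identity of equation (12)): a
solution of the backward Laplace-domain recursion satisfies, for every `x ≤ B`,
`g(x) = (1/(s+S(B))) · ∑_{p ∈ 𝒫(x,B)} ∏_{i=1}^{n−1} λ(p_i, ℐ_i)/(s+S(p_i))`.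
The rate `λ(p_i, ℐ_i)` attached to the unique step index is written as
`∑ₖ [p_{i+1} = p_i + eₖ]·λ(p_i,k)`. -/
theorem backward_path_sum
    (d : ℕ) (hd : 1 ≤ d)
    (lam : (Fin d → ℕ) → Fin d → ℝ)
    (hlam : ∀ x k, 0 ≤ lam x k)
    (B : Fin d → ℕ) (s : ℝ) (hs : 0 < s)
    (hlamB : ∀ x : Fin d → ℕ, ∀ k : Fin d, x ≤ B → ¬ x + Pi.single k 1 ≤ B →
      lam x k = 0)
    (g : (Fin d → ℕ) → ℝ)
    (hgB : g B = 1 / (s + ∑ k, lam B k))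
    (hrec : ∀ x : Fin d → ℕ, x ≤ B → x ≠ B →
      g x = ∑ k, (lam x k / (s + ∑ j, lam x j)) * g (x + Pi.single k 1)) :
    ∀ x : Fin d → ℕ, x ≤ B →
      g x = (1 / (s + ∑ k, lam B k)) *
        ∑' p : {l : List (Fin d → ℕ) // IsPath x B l},
          ∏ i ∈ Finset.range (p.1.length - 1),
            (∑ k, if p.1.getD (i + 1) 0 = p.1.getD i 0 + Pi.single k 1 then
                lam (p.1.getD i 0) k else 0)
              / (s + ∑ k', lam (p.1.getD i 0) k') := by
  classical
  open BackPathAux in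
  -- weight of a path
  set W : List (Fin d → ℕ) → ℝ := fun p =>
    ∏ i ∈ Finset.range (p.length - 1),
      (∑ k, if p.getD (i + 1) 0 = p.getD i 0 + Pi.single k 1 then
          lam (p.getD i 0) k else 0)
        / (s + ∑ k', lam (p.getD i 0) k') with hW
  set F : (Fin d → ℕ) → ℝ := fun x =>
    ∑' p : {l : List (Fin d → ℕ) // IsPath x B l}, W p.1 with hF
  -- weight of a cons
  have hWcons : ∀ (x : Fin d → ℕ) (k : Fin d) (l : List (Fin d → ℕ)), l ≠ [] →
      l.getD 0 0 = x + Pi.single k 1 →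
      W (x :: l) = (lam x k / (s + ∑ j, lam x j)) * W l := by
    intro x k l hl h0
    have hlen : 0 < l.length := List.length_pos_iff.2 hl
    have h1 : (x :: l).length - 1 = (l.length - 1) + 1 := by simp; omega
    rw [hW]
    simp only [h1, Finset.prod_range_succ']
    rw [mul_comm]
    congr 1
    · simp only [List.getD_cons_succ, List.getD_cons_zero]
      congr 1
      rw [h0]
      have : ∀ k' : Fin d,
          (x + Pi.single k 1 = x + Pi.single k' 1) ↔ (k' = k) := by
        intro k'
        constructor
        · intro h; exact (single_inj (add_left_cancel h)).symm
        · rintro rfl; rfl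
      simp only [this]
      simp
  -- F B = 1
  have hFB : F B = 1 := by
    have huniq : ∀ q : {l : List (Fin d → ℕ) // IsPath B B l}, q = ⟨[B], path_single B⟩ := by
      intro q; exact Subtype.ext (path_self q.2)
    have h1 : F B = W [B] :=
      tsum_eq_single (⟨[B], path_single B⟩ : {l : List (Fin d → ℕ) // IsPath B B l})
        (fun b hb => absurd (huniq b) hb)
    rw [h1, hW]
    simp
  -- recursion for F
  have hFrec : ∀ x : Fin d → ℕ, x ≠ B →
      F x = ∑ k, (lam x k / (s + ∑ j, lam x j)) * F (x + Pi.single k 1) := by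
    intro x hx
    haveI : ∀ y : Fin d → ℕ, Finite {l : List (Fin d → ℕ) // IsPath y B l} :=
      fun y => paths_finite y B
    letI : ∀ y : Fin d → ℕ, Fintype {l : List (Fin d → ℕ) // IsPath y B l} :=
      fun y => Fintype.ofFinite _
    -- the bijection: (k, path from x+e_k) → path from x
    set Ψ : (Σ k : Fin d, {l : List (Fin d → ℕ) // IsPath (x + Pi.single k 1) B l}) →
        {l : List (Fin d → ℕ) // IsPath x B l} :=
      fun σ => ⟨x :: σ.2.1, cons_path σ.2.2 rfl⟩ with hΨ
    have hbij : Function.Bijective Ψ := by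
      constructor
      · rintro ⟨k, l, hl⟩ ⟨k', l', hl'⟩ h
        simp only [hΨ, Subtype.mk.injEq, List.cons.injEq, true_and] at h
        have hll' : l = l' := h
        subst hll'
        have h0 : l.getD 0 0 = x + Pi.single k 1 := hl.2.1
        have h0' : l.getD 0 0 = x + Pi.single k' 1 := hl'.2.1
        have : k = k' := single_inj (add_left_cancel (h0.symm.trans h0'))
        subst this
        rfl
      · rintro ⟨p, hp⟩
        obtain ⟨k, l, rfl, hl⟩ := tail_path hp hx
        exact ⟨⟨k, l, hl⟩, rfl⟩
    have hsum : F x = ∑ σ : (Σ k : Fin d,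
        {l : List (Fin d → ℕ) // IsPath (x + Pi.single k 1) B l}), W (Ψ σ).1 :=
      (tsum_fintype _).trans (Function.Bijective.sum_comp hbij (fun q => W q.1)).symm
    rw [hsum, ← Finset.univ_sigma_univ, Finset.sum_sigma]
    apply Finset.sum_congr rfl
    intro k _
    simp only [hF]
    rw [tsum_fintype, Finset.mul_sum]
    apply Finset.sum_congr rfl
    rintro ⟨l, hl⟩ _
    simp only [hΨ]
    exact hWcons x k l hl.1 hl.2.1
  -- main induction on the distance to B
  have key : ∀ n : ℕ, ∀ x : Fin d → ℕ, x ≤ B → (∑ k, (B k - x k)) ≤ n →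
      g x = (1 / (s + ∑ k, lam B k)) * F x := by
    intro n
    induction n with
    | zero =>
      intro x hx hn
      have hxB : x = B := by
        funext i
        have h0 : ∑ k, (B k - x k) = 0 := by omega
        have h1 := (Finset.sum_eq_zero_iff).1 h0 i (Finset.mem_univ i)
        have h2 : x i ≤ B i := hx i
        omega
      subst hxB
      rw [hFB, hgB, mul_one]
    | succ n ih =>
      intro x hx hn
      by_cases hxB : x = B
      · subst hxB; rw [hFB, hgB, mul_one]
      · rw [hrec x hx hxB, hFrec x hxB, Finset.mul_sum]
        apply Finset.sum_congr rfl
        intro k _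
        by_cases hk : x + Pi.single k 1 ≤ B
        · have hmeas : ∑ j, (B j - ((x + Pi.single k 1 : Fin d → ℕ)) j) ≤ n := by
            have hgt : 0 < ∑ j, (B j - x j) := by
              rcases Nat.eq_zero_or_pos (∑ j, (B j - x j)) with h0 | h0
              · exfalso
                apply hxB
                funext i
                have h1 := (Finset.sum_eq_zero_iff).1 h0 i (Finset.mem_univ i)
                have h2 : x i ≤ B i := hx i
                omega
              · exact h0
            have hsplit : ∑ j, (B j - x j)
                = (∑ j, (B j - ((x + Pi.single k 1 : Fin d → ℕ)) j)) + 1 := by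
              have : ∀ j, B j - x j
                  = (B j - ((x + Pi.single k 1 : Fin d → ℕ)) j) + (Pi.single k 1 : Fin d → ℕ) j := by
                intro j
                have h1 : x j + (Pi.single k 1 : Fin d → ℕ) j ≤ B j := hk j
                have h2 : x j ≤ B j := hx j
                simp only [Pi.add_apply]
                omega
              rw [Finset.sum_congr rfl (fun j _ => this j), Finset.sum_add_distrib,
                Finset.sum_pi_single']
              simp
            omega
          rw [ih (x + Pi.single k 1) hk hmeas]
          ring
        · have h0 : lam x k = 0 := hlamB x k hx hk
          rw [h0]
          ring
  intro x hx
  exact key (∑ k, (B k - x k)) x hx le_rfl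
end
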